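/- Let n ≥ 2 be an integer, let p be an odd prime, and let a₁,…,a_n, b₁,…,b_n ∈ 𝔽̄_p be such that the polynomial F(X,Y) = ∏_{i=1}^n (X + a_iY + b_i) ∈ 𝔽̄_p[X,Y] is squarefree (equivalently, the n linear factors are pairwise distinct) and a_i ≠ a₁ for some i ∈ {2,…,n}. Then for every s ∈ 𝔽̄_p, for all but at most n² values of c ∈ 𝔽̄_p, the one-variable polynomial F(X, sX + c) ∈ 𝔽̄_p[X] is nonzero, of degree at least 1, and squarefree. -/

import Mathlib

/-!
Along the line `Y = sX + c` the factor `X + aᵢY + bᵢ` becomes `(1 + aᵢs)X + (aᵢc + bᵢ)`, a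
polynomial of degree at most one. A product of such polynomials is squarefree as soon as no
factor vanishes and no two linear factors are proportional. A factor vanishes only if the line is
the line `Lᵢ = {X + aᵢY + bᵢ = 0}` itself, and two linear factors are proportional only if the
line passes through the intersection point of `Lᵢ` and `Lⱼ` (these are distinct lines by
squarefreeness of `F`); each of these events pins down at most one `c`, for at most
`n + n(n - 1) = n²` values in all. Since two of the `aᵢ` differ, the line is parallel to at most
one direction among the `Lᵢ`, so some factor stays linear and the degree is positive.
-/

open Polynomial

section LinearFactors

variable {F : Type*} [Field F]

theorem isCoprime_C_mul_X_add_C {u₁ v₁ u₂ v₂ : F} (h : u₁ * v₂ ≠ u₂ * v₁) :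
    IsCoprime (C u₁ * X + C v₁) (C u₂ * X + C v₂) := by
  set d := u₁ * v₂ - u₂ * v₁
  have hd : d ≠ 0 := sub_ne_zero.mpr h
  refine ⟨C (-u₂ / d), C (u₁ / d), ?_⟩
  have hX : C (-u₂ / d) * C u₁ + C (u₁ / d) * C u₂ = 0 := by
    rw [← C_mul, ← C_mul, ← C_add, show -u₂ / d * u₁ + u₁ / d * u₂ = 0 by ring, C_0]
  have h1 : C (-u₂ / d) * C v₁ + C (u₁ / d) * C v₂ = 1 := by
    rw [← C_mul, ← C_mul, ← C_add, ← C_1]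
    congr 1
    field_simp
    ring
  linear_combination X * hX + h1

theorem separable_C_mul_X_add_C {u v : F} (h : u = 0 → v ≠ 0) : (C u * X + C v).Separable := by
  rcases eq_or_ne u 0 with hu | hu
  · simpa [hu, separable_C] using h hu
  · rw [separable_def]
    have hcop : IsCoprime (C u * X + C v) (C 0 * X + C u) :=
      isCoprime_C_mul_X_add_C (by simpa using hu)
    simpa using hcop

variable {ι : Type*} [Fintype ι] (u v : ι → F)

theorem squarefree_prod_C_mul_X_add_C (hunit : ∀ i, u i = 0 → v i ≠ 0)
    (hdet : ∀ i j, i ≠ j → u i ≠ 0 → u j ≠ 0 → u i * v j ≠ u j * v i) :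
    Squarefree (∏ i, (C (u i) * X + C (v i))) := by
  refine (separable_prod (fun i j hij ↦ ?_)
    fun i ↦ separable_C_mul_X_add_C (hunit i)).squarefree
  rcases eq_or_ne (u i) 0 with hi | hi
  · exact ⟨C (v i)⁻¹, 0, by simp [hi, ← C_mul, hunit i hi]⟩
  rcases eq_or_ne (u j) 0 with hj | hj
  · exact ⟨0, C (v j)⁻¹, by simp [hj, ← C_mul, hunit j hj]⟩
  exact isCoprime_C_mul_X_add_C (hdet i j hij hi hj)

theorem one_le_natDegree_prod_C_mul_X_add_C {i₀ : ι} (hi₀ : u i₀ ≠ 0)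
    (hprod : ∏ i, (C (u i) * X + C (v i)) ≠ 0) :
    1 ≤ (∏ i, (C (u i) * X + C (v i))).natDegree :=
  (natDegree_linear hi₀).symm.le.trans <|
    natDegree_le_of_dvd (Finset.dvd_prod_of_mem _ (Finset.mem_univ i₀)) hprod

end LinearFactors

theorem Squarefree.isUnit_of_prod_eq {ι M : Type*} [Fintype ι] [CommMonoid M] {f : ι → M}
    (h : Squarefree (∏ i, f i)) {i j : ι} (hij : i ≠ j) (heq : f i = f j) : IsUnit (f i) := by
  classical
  refine h _ ?_
  nth_rw 2 [heq]
  rw [← Finset.prod_pair hij]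
  exact Finset.prod_dvd_prod_of_subset _ _ _ (Finset.subset_univ _)

theorem eq_neg_div_of_mul_add_eq_zero {F : Type*} [Field F] {α β c : F} (h : α * c + β = 0)
    (hne : α = 0 → β ≠ 0) : c = -β / α := by
  rcases eq_or_ne α 0 with hα | hα
  · exact absurd (by simpa [hα] using h) (hne hα)
  · rw [eq_div_iff hα]
    linear_combination h

section Lines

variable {F : Type*} [Field F]

theorem aeval_line_X_add_C_mul_X_add_C (a b s c : F) :
    MvPolynomial.aeval ![X, C s * X + C c]
      (MvPolynomial.X 0 + MvPolynomial.C a * MvPolynomial.X 1 + MvPolynomial.C b :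
        MvPolynomial (Fin 2) F) = C (1 + a * s) * X + C (a * c + b) := by
  simp only [map_add, map_mul, MvPolynomial.aeval_X, MvPolynomial.aeval_C,
    Matrix.cons_val_zero, Matrix.cons_val_one, algebraMap_eq, C_1]
  ring

theorem not_isUnit_X_add_C_mul_X_add_C (a b : F) :
    ¬IsUnit (MvPolynomial.X 0 + MvPolynomial.C a * MvPolynomial.X 1 + MvPolynomial.C b :
      MvPolynomial (Fin 2) F) := by
  intro h
  have := aeval_line_X_add_C_mul_X_add_C a b 0 0 ▸ h.map (MvPolynomial.aeval ![X, C 0 * X + C 0])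
  exact not_isUnit_of_natDegree_pos _ (by simp) this

end Lines

section Exceptional

variable {F ι : Type*} [Field F] [DecidableEq F] [Fintype ι]

/-- `-bᵢ / aᵢ` is the `c` for which `Y = sX + c` is the line `Lᵢ` (when `1 + aᵢs = 0`), and
the second part collects the `c` for which it passes through `Lᵢ ∩ Lⱼ`. -/
def lineExceptionalSet (a b : ι → F) (s : F) : Finset F :=
  Finset.univ.image (fun i ↦ -b i / a i) ∪
    Finset.univ.offDiag.image fun q ↦
      -((1 + a q.1 * s) * b q.2 - (1 + a q.2 * s) * b q.1) / (a q.2 - a q.1)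

theorem card_lineExceptionalSet_le (a b : ι → F) (s : F) :
    (lineExceptionalSet a b s).card ≤ Fintype.card ι ^ 2 := by
  calc _ ≤ Fintype.card ι + (Fintype.card ι * Fintype.card ι - Fintype.card ι) := by
        refine (Finset.card_union_le _ _).trans (add_le_add ?_ ?_)
        · exact Finset.card_image_le
        · exact Finset.card_image_le.trans (by simp)
    _ = Fintype.card ι ^ 2 := by rw [Nat.add_sub_cancel' (Nat.le_mul_self _), sq]

variable {a b : ι → F} {s c : F}

theorem mem_lineExceptionalSet_of_parallel {i : ι} (hpar : 1 + a i * s = 0)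
    (hc : a i * c + b i = 0) : c ∈ lineExceptionalSet a b s := by
  have ha : a i ≠ 0 := fun h ↦ by simp [h] at hpar
  refine Finset.mem_union_left _ (Finset.mem_image.mpr ⟨i, Finset.mem_univ _, ?_⟩)
  exact (eq_neg_div_of_mul_add_eq_zero hc fun h ↦ (ha h).elim).symm

theorem mem_lineExceptionalSet_of_proportional {i j : ι} (hij : i ≠ j)
    (hdist : a i = a j → b i ≠ b j) (hi : 1 + a i * s ≠ 0)
    (hc : (1 + a i * s) * (a j * c + b j) = (1 + a j * s) * (a i * c + b i)) :
    c ∈ lineExceptionalSet a b s := by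
  refine Finset.mem_union_right _ (Finset.mem_image.mpr ⟨(i, j), by simpa using hij, ?_⟩)
  refine (eq_neg_div_of_mul_add_eq_zero (by linear_combination hc) fun h ↦ ?_).symm
  have hab : a i = a j := (sub_eq_zero.mp h).symm
  rw [← hab, ← mul_sub]
  exact mul_ne_zero hi (sub_ne_zero.mpr (hdist hab).symm)

end Exceptional

theorem exists_card_le_sq_forall_squarefree_aeval_line {F ι : Type*} [Field F] [Fintype ι]
    (a b : ι → F)
    (hsf : Squarefree (∏ i, (MvPolynomial.X 0 + MvPolynomial.C (a i) * MvPolynomial.X 1 +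
      MvPolynomial.C (b i) : MvPolynomial (Fin 2) F)))
    (ha : ∃ i j, a i ≠ a j) (s : F) :
    ∃ S : Finset F, S.card ≤ Fintype.card ι ^ 2 ∧ ∀ c ∉ S,
      let P := MvPolynomial.aeval ![X, C s * X + C c] (∏ i, (MvPolynomial.X 0 +
        MvPolynomial.C (a i) * MvPolynomial.X 1 + MvPolynomial.C (b i) : MvPolynomial (Fin 2) F))
      P ≠ 0 ∧ 1 ≤ P.natDegree ∧ Squarefree P := by
  classical
  refine ⟨lineExceptionalSet a b s, card_lineExceptionalSet_le a b s, fun c hc ↦ ?_⟩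
  have hdist : ∀ i j, i ≠ j → a i = a j → b i ≠ b j := fun i j hij hab hb ↦
    not_isUnit_X_add_C_mul_X_add_C (a i) (b i) (hsf.isUnit_of_prod_eq hij (by rw [hab, hb]))
  have hsq : Squarefree (∏ i, (C (1 + a i * s) * X + C (a i * c + b i))) :=
    squarefree_prod_C_mul_X_add_C _ _
      (fun i hi hc' ↦ hc (mem_lineExceptionalSet_of_parallel hi hc'))
      (fun i j hij hi _ hc' ↦
        hc (mem_lineExceptionalSet_of_proportional hij (hdist i j hij) hi hc'))
  obtain ⟨i₀, hi₀⟩ : ∃ i, 1 + a i * s ≠ 0 := by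
    obtain ⟨i, j, hij⟩ := ha
    by_contra! h
    have hs : s = 0 := by
      simpa [sub_ne_zero.mpr hij] using (by linear_combination h i - h j : (a i - a j) * s = 0)
    simpa [hs] using h i
  simp only [map_prod, aeval_line_X_add_C_mul_X_add_C]
  exact ⟨hsq.ne_zero, one_le_natDegree_prod_C_mul_X_add_C _ _ hi₀ hsq.ne_zero, hsq⟩

/-- Let `n ≥ 2`, let `p` be an odd prime, and let `a_i, b_i ∈ 𝔽̄_p` be such
that `F(X,Y) = ∏_{i=1}^n (X + a_iY + b_i)` is squarefree and `a_i ≠ a₁` for some `i`. Then for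
every `s ∈ 𝔽̄_p`, for all but at most `n²` values of `c ∈ 𝔽̄_p`, the one-variable polynomial
`F(X, sX + c)` is nonzero, of degree at least `1`, and squarefree. -/
theorem stmt18 (n : ℕ) (hn : 2 ≤ n) (p : ℕ) [Fact p.Prime]
    (a b : Fin n → AlgebraicClosure (ZMod p))
    (hsf : Squarefree (∏ i : Fin n,
      (MvPolynomial.X 0 + MvPolynomial.C (a i) * MvPolynomial.X 1 + MvPolynomial.C (b i) :
        MvPolynomial (Fin 2) (AlgebraicClosure (ZMod p)))))
    (ha : ∃ i : Fin n, a i ≠ a ⟨0, by omega⟩) :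
    ∀ s : AlgebraicClosure (ZMod p),
      ∃ S : Finset (AlgebraicClosure (ZMod p)), S.card ≤ n ^ 2 ∧
        ∀ c : AlgebraicClosure (ZMod p), c ∉ S →
          (MvPolynomial.aeval
              ![(Polynomial.X : Polynomial (AlgebraicClosure (ZMod p))),
                Polynomial.C s * Polynomial.X + Polynomial.C c]
              (∏ i : Fin n,
                (MvPolynomial.X 0 + MvPolynomial.C (a i) * MvPolynomial.X 1 +
                  MvPolynomial.C (b i))) ≠ 0) ∧
          (1 ≤ (MvPolynomial.aeval
              ![(Polynomial.X : Polynomial (AlgebraicClosure (ZMod p))),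
                Polynomial.C s * Polynomial.X + Polynomial.C c]
              (∏ i : Fin n,
                (MvPolynomial.X 0 + MvPolynomial.C (a i) * MvPolynomial.X 1 +
                  MvPolynomial.C (b i)))).natDegree) ∧
          Squarefree (MvPolynomial.aeval
              ![(Polynomial.X : Polynomial (AlgebraicClosure (ZMod p))),
                Polynomial.C s * Polynomial.X + Polynomial.C c]
              (∏ i : Fin n,
                (MvPolynomial.X 0 + MvPolynomial.C (a i) * MvPolynomial.X 1 +
                  MvPolynomial.C (b i)))) := by
  intro s
  obtain ⟨i, hi⟩ := ha
  simpa using exists_card_le_sq_forall_squarefree_aeval_line a b hsf ⟨i, _, hi⟩ s
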